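/- arXiv:1301.6387 — 2 statements merged into one kernel-verified Lean document; each statement's English description precedes it below -/
import Mathlib

section
/- Let U : ℝ^n → ℝ^d be continuously differentiable. For x ∈ ℝ^n let J(x) denote the d×n Jacobian matrix of U at x and let G(x) = det(J(x)·J(x)ᵀ) (a nonnegative real number). Then the image under U of the measure G(x)·λ^n(dx) is absolutely continuous with respect to Lebesgue measure λ^d on ℝ^d; that is, Measure.map U (λ^n with density G) ≪ λ^d. -/
/-!
Where `det (J Jᵀ) ≠ 0` the Jacobian `J` has the right inverse `Jᵀ (J Jᵀ)⁻¹`, so `DU(x)` is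
surjective: the density vanishes off the regular points of `U`, and it suffices that `U` pushes
Lebesgue measure restricted to its regular points to a measure `≪ λ^d`. Near a regular point `x`,
with `P` a continuous projection onto `ker DU(x)`, the map `y ↦ (U y, P y)` has an invertible
derivative at `x`, hence a `C¹` local inverse; it sends `U⁻¹(A)` into `A × ker DU(x)`, which is
null when `A` is, and a differentiable map between spaces of equal dimension sends null sets to
null sets. Countably many such neighbourhoods cover the regular points.
-/

open MeasureTheory Filter Set Matrix Topology Function

/-- The Jacobian matrix of `U : ℝ^n → ℝ^d` at `x`. -/
noncomputable def jacobianMatrix (n d : ℕ)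
    (U : EuclideanSpace ℝ (Fin n) → EuclideanSpace ℝ (Fin d))
    (x : EuclideanSpace ℝ (Fin n)) : Matrix (Fin d) (Fin n) ℝ :=
  Matrix.of fun i j => fderiv ℝ U x (EuclideanSpace.single j 1) i

lemma withDensity_absolutelyContinuous_restrict_support {α : Type*} [MeasurableSpace α]
    (μ : Measure α) (f : α → ENNReal) : μ.withDensity f ≪ μ.restrict (support f) := by
  refine Measure.AbsolutelyContinuous.mk fun s hs hnull => ?_
  rw [Measure.restrict_apply hs] at hnull
  rw [withDensity_apply _ hs, ← lintegral_zero (μ := μ.restrict s)]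
  refine lintegral_congr_ae ?_
  rw [EventuallyEq, ae_restrict_iff' hs]
  filter_upwards [measure_eq_zero_iff_ae_notMem.1 hnull] with x hx hxs
  by_contra h
  exact hx ⟨hxs, h⟩

lemma Matrix.mulVec_surjective_of_det_mul_transpose_ne_zero {m n K : Type*} [Fintype m]
    [DecidableEq m] [Fintype n] [Field K] (M : Matrix m n K) (h : (M * Mᵀ).det ≠ 0) :
    Surjective M.mulVec := fun w =>
  ⟨Mᵀ *ᵥ ((M * Mᵀ)⁻¹ *ᵥ w), by
    rw [mulVec_mulVec, mulVec_mulVec, mul_nonsing_inv _ h.isUnit, one_mulVec]⟩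

lemma jacobianMatrix_mulVec {n d : ℕ} (U : EuclideanSpace ℝ (Fin n) → EuclideanSpace ℝ (Fin d))
    (x : EuclideanSpace ℝ (Fin n)) (v : Fin n → ℝ) :
    jacobianMatrix n d U x *ᵥ v = fderiv ℝ U x (WithLp.toLp 2 v) := by
  ext i
  conv_rhs => rw [← (EuclideanSpace.basisFun (Fin n) ℝ).sum_repr (WithLp.toLp 2 v)]
  simp [jacobianMatrix, mulVec, dotProduct, mul_comm]

lemma surjective_fderiv_of_det_jacobianMatrix_mul_transpose_ne_zero {n d : ℕ}
    {U : EuclideanSpace ℝ (Fin n) → EuclideanSpace ℝ (Fin d)} {x : EuclideanSpace ℝ (Fin n)}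
    (h : (jacobianMatrix n d U x * (jacobianMatrix n d U x)ᵀ).det ≠ 0) :
    Surjective (fderiv ℝ U x) := fun w => by
  obtain ⟨v, hv⟩ := (jacobianMatrix n d U x).mulVec_surjective_of_det_mul_transpose_ne_zero h w
  exact ⟨WithLp.toLp 2 v, WithLp.ofLp_injective 2 (by rw [← jacobianMatrix_mulVec, hv])⟩

section

variable {E F : Type*}
  [NormedAddCommGroup E] [NormedSpace ℝ E] [MeasurableSpace E] [BorelSpace E]
  [NormedAddCommGroup F] [NormedSpace ℝ F] [FiniteDimensional ℝ F] [MeasurableSpace F] [BorelSpace F]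
  (μ : Measure E) [μ.IsAddHaarMeasure] (ν : Measure F) [ν.IsAddHaarMeasure]

theorem ContinuousLinearEquiv.addHaar_preimage_eq_zero (Φ : E ≃L[ℝ] F) {s : Set F}
    (hs : ν s = 0) : μ (Φ ⁻¹' s) = 0 :=
  (Φ.toHomeomorph.toMeasurableEquiv.map_apply s).symm.trans
    (Measure.absolutelyContinuous_isAddHaarMeasure (μ.map Φ) ν hs)

variable [FiniteDimensional ℝ E]

theorem addHaar_image_eq_zero_of_differentiableOn_of_finrank_eq
    (hEF : Module.finrank ℝ F = Module.finrank ℝ E) {g : F → E} {s : Set F}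
    (hg : DifferentiableOn ℝ g s) (hs : ν s = 0) : μ (g '' s) = 0 := by
  set Φ := ContinuousLinearEquiv.ofFinrankEq hEF.symm
  have himage : g '' s = (g ∘ Φ) '' (Φ ⁻¹' s) := by
    rw [image_comp, image_preimage_eq _ Φ.surjective]
  rw [himage]
  exact addHaar_image_eq_zero_of_differentiableOn_of_addHaar_eq_zero μ
    (hg.comp Φ.differentiableOn (mapsTo_preimage _ _)) (Φ.addHaar_preimage_eq_zero μ ν hs)

theorem exists_mem_nhds_addHaar_preimage_inter_eq_zero {f : E → F} {x : E}
    (hf : ContDiffAt ℝ 1 f x) {Φ : E ≃L[ℝ] F} (hΦ : HasFDerivAt f (Φ : E →L[ℝ] F) x)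
    {N : Set F} (hN : ν N = 0) : ∃ V ∈ 𝓝 x, μ (f ⁻¹' N ∩ V) = 0 := by
  have hs := hf.hasStrictFDerivAt' hΦ one_ne_zero
  obtain ⟨u, hu, hgu⟩ := (hf.to_localInverse hΦ one_ne_zero).contDiffOn le_rfl (by simp)
  refine ⟨{y | hs.localInverse f Φ x (f y) = y} ∩ f ⁻¹' u,
    inter_mem hs.eventually_left_inverse (hf.continuousAt.preimage_mem_nhds hu), ?_⟩
  have hsub : f ⁻¹' N ∩ ({y | hs.localInverse f Φ x (f y) = y} ∩ f ⁻¹' u) ⊆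
      hs.localInverse f Φ x '' (N ∩ u) :=
    fun y ⟨hyN, hyg, hyu⟩ => ⟨f y, ⟨hyN, hyu⟩, hyg⟩
  exact measure_mono_null hsub <| addHaar_image_eq_zero_of_differentiableOn_of_finrank_eq μ ν
    Φ.finrank_eq.symm ((hgu.differentiableOn one_ne_zero).mono inter_subset_right)
    (measure_mono_null inter_subset_left hN)

theorem addHaar_preimage_inter_setOf_surjective_fderiv_eq_zero {f : E → F}
    (hf : ContDiff ℝ 1 f) {A : Set F} (hA : ν A = 0) :
    μ (f ⁻¹' A ∩ {x | Surjective (fderiv ℝ f x)}) = 0 := by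
  refine measure_null_of_locally_null _ fun x ⟨_, hx⟩ => ?_
  set f' := fderiv ℝ f x
  obtain ⟨P, hP⟩ := f'.ker_closedComplemented_of_finiteDimensional_range
  let Φ := f'.equivProdOfSurjectiveOfIsCompl P (LinearMap.range_eq_top.2 hx)
    (LinearMap.range_eq_of_proj hP) (LinearMap.isCompl_of_proj hP)
  have hΦ : HasFDerivAt (fun y => (f y, P y)) (Φ : E →L[ℝ] F × f'.ker) x :=
    (hf.differentiable one_ne_zero x).hasFDerivAt.prodMk P.hasFDerivAt
  have hN : (ν.prod Measure.addHaar) (A ×ˢ (univ : Set f'.ker)) = 0 := by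
    rw [Measure.prod_prod, hA, zero_mul]
  obtain ⟨V, hV, hV0⟩ := exists_mem_nhds_addHaar_preimage_inter_eq_zero μ _
    (hf.contDiffAt.prodMk P.contDiff.contDiffAt) hΦ hN
  refine ⟨_, inter_mem_nhdsWithin _ hV, measure_mono_null ?_ hV0⟩
  exact inter_subset_inter_left V fun y hy => mk_mem_prod hy.1 (mem_univ _)

theorem map_restrict_setOf_surjective_fderiv_absolutelyContinuous {f : E → F}
    (hf : ContDiff ℝ 1 f) : (μ.restrict {x | Surjective (fderiv ℝ f x)}).map f ≪ ν := by
  refine Measure.AbsolutelyContinuous.mk fun A hA hνA => ?_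
  have hfA := hf.continuous.measurable hA
  rw [Measure.map_apply hf.continuous.measurable hA, Measure.restrict_apply hfA]
  exact addHaar_preimage_inter_setOf_surjective_fderiv_eq_zero μ ν hf hνA

end

/-- **EID for the flat structure.** For `U : ℝ^n → ℝ^d` of class `C¹`,
the image under `U` of the measure `det(J(x)·J(x)ᵀ)·λⁿ(dx)` is absolutely continuous
with respect to Lebesgue measure on `ℝ^d`. -/
theorem energy_image_density_flat (n d : ℕ)
    (U : EuclideanSpace ℝ (Fin n) → EuclideanSpace ℝ (Fin d))
    (hU : ContDiff ℝ 1 U) :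
    Measure.map U
        (volume.withDensity fun x =>
          ENNReal.ofReal (jacobianMatrix n d U x * (jacobianMatrix n d U x).transpose).det)
      ≪ (volume : Measure (EuclideanSpace ℝ (Fin d))) := by
  have hregular : (support fun x =>
      ENNReal.ofReal (jacobianMatrix n d U x * (jacobianMatrix n d U x).transpose).det) ⊆
      {x | Surjective (fderiv ℝ U x)} := fun x hx =>
    surjective_fderiv_of_det_jacobianMatrix_mul_transpose_ne_zero
      (ENNReal.ofReal_pos.1 (pos_iff_ne_zero.2 hx)).ne'
  refine (Measure.AbsolutelyContinuous.map ?_ hU.continuous.measurable).trans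
    (map_restrict_setOf_surjective_fderiv_absolutelyContinuous volume volume hU)
  exact (withDensity_absolutelyContinuous_restrict_support _ _).trans
    (Measure.restrict_mono hregular le_rfl).absolutelyContinuous
end

section
/- Let n ≥ 1 and let r : Fin n → ℝ and θ : Fin n → ℝ. Suppose there exist indices i ≠ j with r(i) ≠ 0, r(j) ≠ 0, and sin(θ(i) − θ(j)) ≠ 0. Then the determinant of the 2×2 real matrix Σ_{k} r(k)²·M(θ(k)) is strictly positive. -/
/-! Each `r² • M θ` is the outer product of `r • (sin θ, cos θ)` with itself, so the determinant
of the sum is a Gram determinant. By Lagrange's identity it is half the sum of the squared cross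
products `r k * r l * sin (θ k - θ l)`, and the term of the pair `(i, j)` is positive. -/

open Real

noncomputable def M (θ : ℝ) : Matrix (Fin 2) (Fin 2) ℝ :=
  !![sin θ ^ 2, cos θ * sin θ; cos θ * sin θ, cos θ ^ 2]

namespace Finset

variable {ι R : Type*}

theorem sum_sum_mul_sub_mul_sq [CommRing R] (s : Finset ι) (u v : ι → R) :
    ∑ k ∈ s, ∑ l ∈ s, (u k * v l - u l * v k) ^ 2
      = 2 * ((∑ k ∈ s, u k ^ 2) * (∑ k ∈ s, v k ^ 2) - (∑ k ∈ s, u k * v k) ^ 2) := by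
  have expand : ∀ k l, (u k * v l - u l * v k) ^ 2
      = u k ^ 2 * v l ^ 2 + v k ^ 2 * u l ^ 2 - 2 * ((u k * v k) * (u l * v l)) :=
    fun k l => by ring
  simp only [expand, sum_sub_distrib, sum_add_distrib, ← mul_sum, ← sum_mul]
  ring

theorem sq_sum_mul_lt_sum_sq_mul_sum_sq [CommRing R] [LinearOrder R] [IsStrictOrderedRing R]
    {s : Finset ι} {u v : ι → R} {i j : ι} (hi : i ∈ s) (hj : j ∈ s)
    (hij : u i * v j - u j * v i ≠ 0) :
    (∑ k ∈ s, u k * v k) ^ 2 < (∑ k ∈ s, u k ^ 2) * ∑ k ∈ s, v k ^ 2 := by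
  have hpos : 0 < ∑ k ∈ s, ∑ l ∈ s, (u k * v l - u l * v k) ^ 2 := by
    calc 0 < (u i * v j - u j * v i) ^ 2 := by positivity
      _ ≤ ∑ l ∈ s, (u i * v l - u l * v i) ^ 2 :=
        single_le_sum (f := fun l => (u i * v l - u l * v i) ^ 2)
          (fun _ _ => sq_nonneg _) hj
      _ ≤ ∑ k ∈ s, ∑ l ∈ s, (u k * v l - u l * v k) ^ 2 :=
        single_le_sum (f := fun k => ∑ l ∈ s, (u k * v l - u l * v k) ^ 2)
          (fun _ _ => sum_nonneg fun _ _ => sq_nonneg _) hi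
  rw [sum_sum_mul_sub_mul_sq] at hpos
  linarith

end Finset

open Matrix in
theorem Matrix.det_sum_vecMulVec_self_fin_two {ι R : Type*} [CommRing R] (s : Finset ι)
    (x : ι → Fin 2 → R) :
    (∑ k ∈ s, vecMulVec (x k) (x k)).det
      = (∑ k ∈ s, x k 0 ^ 2) * (∑ k ∈ s, x k 1 ^ 2) - (∑ k ∈ s, x k 0 * x k 1) ^ 2 := by
  simp only [det_fin_two, sum_apply, vecMulVec_apply, mul_comm (x _ 1) (x _ 0), ← sq]

theorem sq_smul_M_eq_vecMulVec (r θ : ℝ) :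
    r ^ 2 • M θ = Matrix.vecMulVec (r • ![sin θ, cos θ]) (r • ![sin θ, cos θ]) := by
  ext a b
  fin_cases a <;> fin_cases b <;> simp [M, Matrix.vecMulVec_apply] <;> ring

theorem det_sum_smul_M_pos_general (n : ℕ) (r θ : Fin n → ℝ)
    (h : ∃ i j : Fin n, i ≠ j ∧ r i ≠ 0 ∧ r j ≠ 0 ∧ sin (θ i - θ j) ≠ 0) :
    0 < (∑ k, r k ^ 2 • M (θ k)).det := by
  obtain ⟨i, j, -, hri, hrj, hsin⟩ := h
  simp only [sq_smul_M_eq_vecMulVec, Matrix.det_sum_vecMulVec_self_fin_two]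
  refine sub_pos.2 (Finset.sq_sum_mul_lt_sum_sq_mul_sum_sq (Finset.mem_univ i)
    (Finset.mem_univ j) ?_)
  have cross : r i * sin (θ i) * (r j * cos (θ j)) - r j * sin (θ j) * (r i * cos (θ i))
      = r i * r j * sin (θ i - θ j) := by
    rw [sin_sub]; ring
  simpa [cross] using mul_ne_zero (mul_ne_zero hri hrj) hsin

/-- If among the terms of `Σ_k r(k)²·M(θ(k))` there are two indices
`i ≠ j` with `r i ≠ 0`, `r j ≠ 0` and `sin (θ i − θ j) ≠ 0`, then the determinant of
the sum is strictly positive. -/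
theorem det_sum_smul_M_pos (n : ℕ) (hn : 1 ≤ n) (r θ : Fin n → ℝ)
    (h : ∃ i j : Fin n, i ≠ j ∧ r i ≠ 0 ∧ r j ≠ 0 ∧ sin (θ i - θ j) ≠ 0) :
    0 < (∑ k, r k ^ 2 • M (θ k)).det :=
  det_sum_smul_M_pos_general n r θ h
end
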